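/- Let T be a tree on n vertices and S a global defensive alliance with |S| = k. Then k ≥ (n+2)/4, i.e., 4k ≥ n + 2. (This follows from 0 ≤ |E_Y| ≤ 2k − n/2 − 1.) -/

import Mathlib

open SimpleGraph Finset
open scoped Classical

/-- The closed neighborhood `N[v]` of a vertex `v`. -/
noncomputable def closedNbhd {V : Type*} [Fintype V] (G : SimpleGraph V) (v : V) : Finset V :=
  insert v (Finset.univ.filter (fun u => G.Adj v u))

/-- `S` is a dominating set: every vertex outside `S` has a neighbor in `S`. -/
def Dominating {V : Type*} [Fintype V] (G : SimpleGraph V) (S : Finset V) : Prop :=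
  ∀ v, v ∉ S → ∃ u ∈ S, G.Adj v u

/-- `S` is a global defensive alliance. -/
def GlobalDefensiveAlliance {V : Type*} [Fintype V] (G : SimpleGraph V) (S : Finset V) : Prop :=
  Dominating G S ∧ ∀ v ∈ S, (closedNbhd G v \ S).card ≤ (closedNbhd G v ∩ S).card

/-- `S` is a global offensive alliance. -/
def GlobalOffensiveAlliance {V : Type*} [Fintype V] (G : SimpleGraph V) (S : Finset V) : Prop :=
  Dominating G S ∧ ∀ v, v ∉ S → (∃ u ∈ S, G.Adj v u) →
    (closedNbhd G v \ S).card ≤ (closedNbhd G v ∩ S).card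

/-- Edges with both endpoints in `S`. -/
noncomputable def edgesInside {V : Type*} [Fintype V] (G : SimpleGraph V) (S : Finset V) :
    Finset (Sym2 V) :=
  G.edgeFinset.filter (fun e => ∀ x ∈ e, x ∈ S)

/-- Edges with both endpoints outside `S`. -/
noncomputable def edgesOutside {V : Type*} [Fintype V] (G : SimpleGraph V) (S : Finset V) :
    Finset (Sym2 V) :=
  G.edgeFinset.filter (fun e => ∀ x ∈ e, x ∉ S)

/-- Edges with exactly one endpoint in `S`. -/
noncomputable def edgesBetween {V : Type*} [Fintype V] (G : SimpleGraph V) (S : Finset V) :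
    Finset (Sym2 V) :=
  G.edgeFinset.filter (fun e => (∃ x ∈ e, x ∈ S) ∧ (∃ x ∈ e, x ∉ S))

/-- The global defensive alliance number `γ_a(G)`. -/
noncomputable def gammaA {V : Type*} [Fintype V] (G : SimpleGraph V) : ℕ :=
  sInf {k | ∃ S : Finset V, GlobalDefensiveAlliance G S ∧ S.card = k}

/-- The global offensive alliance number `γ_o(G)`. -/
noncomputable def gammaO {V : Type*} [Fintype V] (G : SimpleGraph V) : ℕ :=
  sInf {k | ∃ S : Finset V, GlobalOffensiveAlliance G S ∧ S.card = k}

/-!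
Let `a = ∑_{v ∈ S} |N(v) ∩ S|` and `b = ∑_{v ∈ S} |N(v) \ S|`, the latter being the number of
edges between `S` and its complement. The alliance condition `|N(v) \ S| ≤ |N(v) ∩ S| + 1` summed
over `S` gives `b ≤ a + k`, domination gives `n - k ≤ b`, and the handshake lemma gives
`a + 2b ≤ 2|E| = 2(n - 1)`. Hence `3(n - k) - k ≤ 3b - k ≤ a + 2b ≤ 2n - 2`.
-/

namespace SimpleGraph

variable {V : Type*} [Fintype V] (G : SimpleGraph V) (S : Finset V)

theorem sum_card_neighborFinset_sdiff_eq_sum_card_neighborFinset_inter :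
    ∑ v ∈ S, #(G.neighborFinset v \ S) = ∑ u ∈ Sᶜ, #(G.neighborFinset u ∩ S) := by
  have hAbove : ∀ v, G.neighborFinset v \ S = Sᶜ.bipartiteAbove G.Adj v := fun v => by
    ext u; simp [bipartiteAbove, and_comm]
  have hBelow : ∀ u, G.neighborFinset u ∩ S = S.bipartiteBelow G.Adj u := fun u => by
    ext v; simp [bipartiteBelow, and_comm, G.adj_comm]
  simp only [hAbove, hBelow]
  exact sum_card_bipartiteAbove_eq_sum_card_bipartiteBelow _

theorem sum_card_neighborFinset_inter_add_two_mul_le :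
    ∑ v ∈ S, #(G.neighborFinset v ∩ S) + 2 * ∑ v ∈ S, #(G.neighborFinset v \ S) ≤
      2 * #G.edgeFinset := by
  have hS : ∑ v ∈ S, G.degree v =
      ∑ v ∈ S, #(G.neighborFinset v ∩ S) + ∑ v ∈ S, #(G.neighborFinset v \ S) := by
    rw [← sum_add_distrib]
    exact sum_congr rfl fun v _ => (card_inter_add_card_sdiff _ _).symm
  have hSc : ∑ u ∈ Sᶜ, #(G.neighborFinset u ∩ S) ≤ ∑ u ∈ Sᶜ, G.degree u :=
    sum_le_sum fun u _ => card_le_card inter_subset_left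
  rw [← G.sum_degrees_eq_twice_card_edges, ← sum_add_sum_compl S,
    G.sum_card_neighborFinset_sdiff_eq_sum_card_neighborFinset_inter] at *
  omega

end SimpleGraph

section

variable {V : Type*} [Fintype V] {G : SimpleGraph V} {S : Finset V}

theorem closedNbhd_sdiff_of_mem {v : V} (hv : v ∈ S) :
    closedNbhd G v \ S = G.neighborFinset v \ S := by
  ext u
  by_cases huv : u = v
  · subst huv; simp [closedNbhd, hv]
  · simp [closedNbhd, huv]

theorem closedNbhd_inter_of_mem {v : V} (hv : v ∈ S) :
    closedNbhd G v ∩ S = insert v (G.neighborFinset v ∩ S) := by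
  ext u
  by_cases huv : u = v
  · subst huv; simp [closedNbhd, hv]
  · simp [closedNbhd, huv]

theorem Dominating.card_compl_le_sum_card_neighborFinset_inter (h : Dominating G S) :
    #Sᶜ ≤ ∑ u ∈ Sᶜ, #(G.neighborFinset u ∩ S) := by
  rw [card_eq_sum_ones]
  refine sum_le_sum fun u hu => card_pos.mpr ?_
  obtain ⟨w, hwS, huw⟩ := h u (mem_compl.mp hu)
  exact ⟨w, mem_inter.mpr ⟨(G.mem_neighborFinset u w).mpr huw, hwS⟩⟩

theorem GlobalDefensiveAlliance.card_neighborFinset_sdiff_le (h : GlobalDefensiveAlliance G S)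
    {v : V} (hv : v ∈ S) : #(G.neighborFinset v \ S) ≤ #(G.neighborFinset v ∩ S) + 1 := by
  have := h.2 v hv
  rwa [closedNbhd_sdiff_of_mem hv, closedNbhd_inter_of_mem hv,
    card_insert_of_notMem (fun hv' => G.notMem_neighborFinset_self v (mem_inter.mp hv').1)] at this

theorem GlobalDefensiveAlliance.three_mul_card_le (h : GlobalDefensiveAlliance G S) :
    3 * Fintype.card V ≤ 4 * #S + 2 * #G.edgeFinset := by
  have hAlliance :
      ∑ v ∈ S, #(G.neighborFinset v \ S) ≤ ∑ v ∈ S, #(G.neighborFinset v ∩ S) + #S := by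
    rw [card_eq_sum_ones S, ← sum_add_distrib]
    exact sum_le_sum fun v hv => h.card_neighborFinset_sdiff_le hv
  have hDom := h.1.card_compl_le_sum_card_neighborFinset_inter
  rw [← G.sum_card_neighborFinset_sdiff_eq_sum_card_neighborFinset_inter] at hDom
  have hEdges := G.sum_card_neighborFinset_inter_add_two_mul_le S
  have hCard := card_compl_add_card S
  omega

end

/-- For a global defensive alliance S of size k in a tree on n vertices, 4k ≥ n + 2. -/
theorem stmt_17 {V : Type*} [Fintype V] (G : SimpleGraph V) (hT : G.IsTree)
    (S : Finset V) (hS : GlobalDefensiveAlliance G S) (k : ℕ) (hk : S.card = k) :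
    Fintype.card V + 2 ≤ 4 * k := by
  have h := hS.three_mul_card_le
  have hEdges := hT.card_edgeFinset
  omega
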